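/- For every θ ∈ (−π, π), the inverse one-cut conformal map ψ(ω) = (√(1+ω) − 1)/(√(1+ω) + 1) (principal square root) satisfies |ψ(e^{iθ})| ≥ 3 − 2√2 = (√2+1)^{−2}, with equality if and only if θ = 0. In other words, the infimum of |ψ| over the unit circle minus the branch point −1 equals (√2+1)^{−2} and is attained exactly at ω = 1. -/

import Mathlib

/-- The inverse one-cut conformal map `ψ(ω) = (√(1+ω) - 1)/(√(1+ω) + 1)`,
with the principal branch of the square root. -/
noncomputable def oneCutInv (ω : ℂ) : ℂ :=
  ((1 + ω) ^ ((1 : ℂ) / 2) - 1) / ((1 + ω) ^ ((1 : ℂ) / 2) + 1)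

lemma key_real (u B : ℝ) (hB : 0 ≤ B) (hB2 : B ^ 2 = u ^ 2 - 1) (hu1 : 1 ≤ u) (hu3 : u ≤ 3) :
    3 - 2 * Real.sqrt 2 ≤ u - B ∧ (u - B = 3 - 2 * Real.sqrt 2 ↔ u = 3) := by
  set t := Real.sqrt 2 with ht
  have ht2 : t ^ 2 = 2 := Real.sq_sqrt (by norm_num)
  have ht0 : 0 ≤ t := Real.sqrt_nonneg 2
  have ht1 : 1 ≤ t := by nlinarith
  have hBle : B ≤ 2 * t := by nlinarith
  have hUB : 0 < u - B := by nlinarith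
  have h32 : 0 < 3 - 2 * t := by nlinarith
  have hprod : 0 ≤ (u - B) * (3 + 2 * t - (u + B)) :=
    mul_nonneg hUB.le (by linarith)
  constructor
  · nlinarith [hprod, mul_pos h32 h32]
  · constructor
    · intro h
      have hsum : u + B = 3 + 2 * t := by
        have h1 : (3 - 2 * t) * (u + B) = (3 - 2 * t) * (3 + 2 * t) := by nlinarith
        exact mul_left_cancel₀ (ne_of_gt h32) h1
      linarith
    · intro h
      subst h
      have : B = 2 * t := by nlinarith [sq_nonneg (B - 2 * t)]
      rw [this]

/-- For every `θ ∈ (-π, π)`, `|ψ(e^{iθ})| ≥ 3 - 2√2 = (√2+1)^{-2}`, with equality iff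
`θ = 0`: the infimum of `|ψ|` on the unit circle is attained exactly at `ω = 1`. -/
theorem oneCutInv_abs_on_circle (θ : ℝ) (hθ : θ ∈ Set.Ioo (-Real.pi) Real.pi) :
    (3 - 2 * Real.sqrt 2 = ((Real.sqrt 2 + 1) ^ 2)⁻¹) ∧
    3 - 2 * Real.sqrt 2 ≤ ‖oneCutInv (Complex.exp (θ * Complex.I))‖ ∧
    (‖oneCutInv (Complex.exp (θ * Complex.I))‖ = 3 - 2 * Real.sqrt 2 ↔ θ = 0) := by
  obtain ⟨hθ1, hθ2⟩ := hθ
  have hpi := Real.pi_pos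
  have ht2 : Real.sqrt 2 ^ 2 = 2 := Real.sq_sqrt (by norm_num)
  have ht0 : (0:ℝ) ≤ Real.sqrt 2 := Real.sqrt_nonneg 2
  have part1 : 3 - 2 * Real.sqrt 2 = ((Real.sqrt 2 + 1) ^ 2)⁻¹ := by
    have h : (Real.sqrt 2 + 1) ^ 2 = 3 + 2 * Real.sqrt 2 := by nlinarith
    rw [h]
    refine eq_inv_of_mul_eq_one_left ?_
    nlinarith
  -- trig setup
  set c2 := Real.cos (θ / 2) with hc2def
  set c := Real.cos (θ / 4) with hcdef
  set s := Real.sin (θ / 4) with hsdef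
  set r := 2 * c2 with hrdef
  have hc2pos : 0 < c2 := Real.cos_pos_of_mem_Ioo ⟨by linarith, by linarith⟩
  have hcpos : 0 < c := Real.cos_pos_of_mem_Ioo ⟨by linarith, by linarith⟩
  have hr : 0 < r := by positivity
  have hcosθ : Real.cos θ = 2 * c2 ^ 2 - 1 := by
    have := Real.cos_two_mul (θ / 2)
    rwa [show 2 * (θ / 2) = θ by ring] at this
  have hsinθ : Real.sin θ = 2 * Real.sin (θ / 2) * c2 := by
    have := Real.sin_two_mul (θ / 2)
    rwa [show 2 * (θ / 2) = θ by ring] at this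
  have hc2c : c2 = 2 * c ^ 2 - 1 := by
    have := Real.cos_two_mul (θ / 4)
    rwa [show 2 * (θ / 4) = θ / 2 by ring] at this
  have key : (1 : ℂ) + Complex.exp (θ * Complex.I) =
      (r : ℂ) * Complex.exp ((θ / 2 : ℝ) * Complex.I) := by
    rw [Complex.exp_mul_I, Complex.exp_mul_I]
    rw [show Complex.cos θ = ((Real.cos θ : ℝ) : ℂ) from (Complex.ofReal_cos θ).symm,
        show Complex.sin θ = ((Real.sin θ : ℝ) : ℂ) from (Complex.ofReal_sin θ).symm,
        show Complex.cos (θ / 2 : ℝ) = ((c2 : ℝ) : ℂ) from (Complex.ofReal_cos (θ/2)).symm,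
        show Complex.sin (θ / 2 : ℝ) = ((Real.sin (θ/2) : ℝ) : ℂ) from (Complex.ofReal_sin (θ/2)).symm]
    rw [hcosθ, hsinθ, hrdef]
    push_cast
    ring
  have hne : (1 : ℂ) + Complex.exp (θ * Complex.I) ≠ 0 := by
    rw [key]
    apply mul_ne_zero
    · exact_mod_cast ne_of_gt hr
    · exact Complex.exp_ne_zero _
  have habs : ‖1 + Complex.exp (θ * Complex.I)‖ = r := by
    rw [key, norm_mul, Complex.norm_exp_ofReal_mul_I, Complex.norm_real, Real.norm_eq_abs, abs_of_pos hr, mul_one]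
  have harg : Complex.arg (1 + Complex.exp (θ * Complex.I)) = θ / 2 := by
    rw [key, Complex.exp_mul_I]
    exact Complex.arg_mul_cos_add_sin_mul_I (θ := θ/2) hr ⟨by linarith, by linarith⟩
  have hlog : Complex.log (1 + Complex.exp (θ * Complex.I)) =
      (Real.log r : ℂ) + (θ / 2 : ℝ) * Complex.I := by
    apply Complex.ext
    · rw [Complex.log_re, habs]
      simp
    · rw [Complex.log_im, harg]
      simp
  have hw : (1 + Complex.exp (θ * Complex.I)) ^ ((1 : ℂ) / 2) =
      (Real.sqrt r : ℂ) * Complex.exp ((θ / 4 : ℝ) * Complex.I) := by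
    rw [Complex.cpow_def_of_ne_zero hne, hlog, add_mul, Complex.exp_add]
    congr 1
    · rw [show (Real.log r : ℂ) * (1 / 2) = ((Real.log r / 2 : ℝ) : ℂ) by push_cast; ring,
          ← Complex.ofReal_exp]
      norm_cast
      rw [Real.sqrt_eq_rpow, Real.rpow_def_of_pos hr]
      ring_nf
    · congr 1
      push_cast
      ring
  set sr := Real.sqrt r with hsrdef
  have hsr2 : sr ^ 2 = r := Real.sq_sqrt hr.le
  have hsr0 : 0 ≤ sr := Real.sqrt_nonneg r
  have hsc : s ^ 2 + c ^ 2 = 1 := Real.sin_sq_add_cos_sq (θ / 4)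
  set u := r + 1 with hudef
  set B := 2 * sr * c with hBdef
  set N := u - B with hNdef
  set D := u + B with hDdef
  clear_value c2 c s r sr u B N D
  have hB0 : 0 ≤ B := by
    rw [hBdef]
    exact mul_nonneg (mul_nonneg (by norm_num) hsr0) hcpos.le
  have hB2 : B ^ 2 = u ^ 2 - 1 := by
    rw [hBdef, hudef]
    linear_combination (4 * c ^ 2) * hsr2 + (-r) * hrdef + (-2 * r) * hc2c
  have hu1 : 1 < u := by rw [hudef]; linarith
  have hu3 : u ≤ 3 := by
    have h1 : c2 ≤ 1 := by rw [hc2def]; exact Real.cos_le_one _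
    rw [hudef, hrdef]; linarith
  have hND : N * D = 1 := by
    rw [hNdef, hDdef]
    linear_combination -hB2
  have hD : 0 < D := by rw [hDdef]; linarith
  have hN : 0 < N := by nlinarith [hND, hD]
  -- compute the absolute value
  have hexp4 : Complex.exp ((θ / 4 : ℝ) * Complex.I) = (c : ℂ) + (s : ℂ) * Complex.I := by
    rw [Complex.exp_mul_I, hcdef, hsdef, Complex.ofReal_cos, Complex.ofReal_sin]
  have habs1 : ‖(sr : ℂ) * Complex.exp ((θ / 4 : ℝ) * Complex.I) - 1‖
      = Real.sqrt N := by
    rw [hexp4, Complex.norm_def]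
    congr 1
    simp only [Complex.normSq_apply, Complex.sub_re, Complex.sub_im, Complex.add_re,
      Complex.add_im, Complex.mul_re, Complex.mul_im, Complex.I_re, Complex.I_im,
      Complex.ofReal_re, Complex.ofReal_im, Complex.one_re, Complex.one_im]
    rw [hNdef, hudef, hBdef]
    linear_combination (c ^ 2 + s ^ 2) * hsr2 + r * hsc
  have habs2 : ‖(sr : ℂ) * Complex.exp ((θ / 4 : ℝ) * Complex.I) + 1‖
      = Real.sqrt D := by
    rw [hexp4, Complex.norm_def]
    congr 1
    simp only [Complex.normSq_apply, Complex.sub_re, Complex.sub_im, Complex.add_re,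
      Complex.add_im, Complex.mul_re, Complex.mul_im, Complex.I_re, Complex.I_im,
      Complex.ofReal_re, Complex.ofReal_im, Complex.one_re, Complex.one_im]
    rw [hDdef, hudef, hBdef]
    linear_combination (c ^ 2 + s ^ 2) * hsr2 + r * hsc
  have habspsi : ‖oneCutInv (Complex.exp (θ * Complex.I))‖ = N := by
    rw [oneCutInv, norm_div, hw, habs1, habs2]
    have hmul : Real.sqrt N * Real.sqrt D = 1 := by
      rw [← Real.sqrt_mul hN.le, hND, Real.sqrt_one]
    have hsq : Real.sqrt N ^ 2 = N := Real.sq_sqrt hN.le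
    have hsD : 0 < Real.sqrt D := Real.sqrt_pos.mpr hD
    rw [div_eq_iff (ne_of_gt hsD)]
    have h2 : Real.sqrt N * (Real.sqrt N * Real.sqrt D) = N * Real.sqrt D := by
      rw [← mul_assoc, Real.mul_self_sqrt hN.le]
    rw [← h2, hmul, mul_one]
  obtain ⟨hineq, hiff⟩ := key_real u B hB0 hB2 hu1.le hu3
  rw [hNdef] at habspsi
  refine ⟨part1, by rw [habspsi]; exact hineq, ?_⟩
  rw [habspsi, hiff]
  constructor
  · intro h
    have hc21 : c2 = 1 := by
      rw [hudef, hrdef] at h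
      linarith
    rw [hc2def] at hc21
    have h0 := (Real.cos_eq_one_iff_of_lt_of_lt (x := θ / 2) (by linarith) (by linarith)).mp hc21
    linarith
  · intro h
    subst h
    have h1 : c2 = 1 := by rw [hc2def]; norm_num
    rw [hudef, hrdef, h1]
    norm_num
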